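/- arXiv:2601.18504 — 4 statements merged into one kernel-verified Lean document; each statement's English description precedes it below -/
import Mathlib

section
/- Consider the curvature-type tensor on a 6-dimensional real inner product space (V, gₐ) with commuting structures J₁, J (complex structures) and P (involution, P = -J∘J₁), defined by R(X,Y)Z = ((a-1)(a+2)/a²)(X∧Y)Z + (1/a)[(X∧Y)Z + (J₁X∧J₁Y)Z + 2gₐ(X,J₁Y)J₁Z] + ((1-a)/a²)[(X∧Y)Z + (JX∧JY)Z + 2gₐ(X,JY)JZ] + ((1-a)/a)[(X∧Y)PZ + P(X∧Y)Z - ((a+2)/a)P(X∧Y)PZ], where (X∧Y)Z = gₐ(Y,Z)X - gₐ(X,Z)Y. Then R satisfies the symmetries of a Riemann curvature tensor: R(X,Y)Z = -R(Y,X)Z, gₐ(R(X,Y)Z,W) = -gₐ(R(X,Y)W,Z), and the first Bianchi identity R(X,Y)Z + R(Y,Z)X + R(Z,X)Y = 0. -/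
/-!
Call a trilinear map `R` an algebraic curvature tensor if it has the three symmetries in question;
such maps form a linear subspace, so it suffices to write `R` as a linear combination of
algebraic curvature tensors. Its summands are: `X ∧ Y`; the Kähler tensor
`X ∧ Y + JX ∧ JY + 2 g(X, JY) J`, which has the symmetries for every `g`-skew `J` (here `J₁` and
`J`, skew because they are isometric with square `-1`); and, for the `g`-symmetric `P`, the
Kulkarni–Nomizu products `g ⊙ h` and `h ⊙ h` of `g` and `h = g(P·, ·)`, namely
`(X ∧ Y)PZ + P(X ∧ Y)Z` and `P(X ∧ Y)PZ = (PX ∧ PY)Z`.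
-/

open scoped RealInnerProductSpace

/-- `(X ∧ Y)Z = gₐ(Y,Z)X - gₐ(X,Z)Y`. -/
noncomputable def wedge {V : Type*} [NormedAddCommGroup V] [InnerProductSpace ℝ V]
    (X Y Z : V) : V := ⟪Y, Z⟫ • X - ⟪X, Z⟫ • Y

section

variable (V : Type*) [NormedAddCommGroup V] [InnerProductSpace ℝ V]

def algebraicCurvatureTensors : Submodule ℝ (V → V → V → V) where
  carrier := {R | (∀ X Y Z : V, R X Y Z = -R Y X Z) ∧
    (∀ X Y Z W : V, ⟪R X Y Z, W⟫ = -⟪R X Y W, Z⟫) ∧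
    (∀ X Y Z : V, R X Y Z + R Y Z X + R Z X Y = 0)}
  zero_mem' := by simp
  add_mem' := by
    rintro R S ⟨hR₁, hR₂, hR₃⟩ ⟨hS₁, hS₂, hS₃⟩
    refine ⟨fun X Y Z => ?_, fun X Y Z W => ?_, fun X Y Z => ?_⟩
    · simp only [Pi.add_apply, hR₁ X Y Z, hS₁ X Y Z, neg_add]
    · simp only [Pi.add_apply, inner_add_left, hR₂ X Y Z W, hS₂ X Y Z W, neg_add]
    · simp only [Pi.add_apply]
      linear_combination (norm := module) hR₃ X Y Z + hS₃ X Y Z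
  smul_mem' := by
    rintro c R ⟨hR₁, hR₂, hR₃⟩
    refine ⟨fun X Y Z => ?_, fun X Y Z W => ?_, fun X Y Z => ?_⟩
    · simp only [Pi.smul_apply, hR₁ X Y Z, smul_neg]
    · simp only [Pi.smul_apply, real_inner_smul_left, hR₂ X Y Z W, mul_neg]
    · simp only [Pi.smul_apply, ← smul_add, hR₃ X Y Z, smul_zero]

variable {V}

theorem inner_wedge_left (X Y Z W : V) :
    ⟪wedge X Y Z, W⟫ = ⟪Y, Z⟫ * ⟪X, W⟫ - ⟪X, Z⟫ * ⟪Y, W⟫ := by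
  simp only [wedge, inner_sub_left, real_inner_smul_left]

theorem wedge_mem_algebraicCurvatureTensors :
    (wedge : V → V → V → V) ∈ algebraicCurvatureTensors V := by
  refine ⟨fun X Y Z => ?_, fun X Y Z W => ?_, fun X Y Z => ?_⟩
  · simp only [wedge]; module
  · rw [inner_wedge_left, inner_wedge_left]; ring
  · simp only [wedge, real_inner_comm X Z, real_inner_comm X Y, real_inner_comm Y Z]; module

noncomputable def kaehlerWedge (T : V →ₗ[ℝ] V) (X Y Z : V) : V :=
  wedge X Y Z + wedge (T X) (T Y) Z + (2 * ⟪X, T Y⟫) • T Z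

noncomputable def symmWedge (S : V →ₗ[ℝ] V) (X Y Z : V) : V :=
  wedge X Y (S Z) + S (wedge X Y Z)

noncomputable def conjWedge (S : V →ₗ[ℝ] V) (X Y Z : V) : V :=
  S (wedge X Y (S Z))

theorem inner_map_left_eq_neg_of_comp_self_eq_neg_id {T : V →ₗ[ℝ] V}
    (hsq : T ∘ₗ T = -LinearMap.id) (hiso : ∀ x y : V, ⟪T x, T y⟫ = ⟪x, y⟫) (x y : V) :
    ⟪T x, y⟫ = -⟪x, T y⟫ := by
  have hTT : T (T y) = -y := by simpa using LinearMap.congr_fun hsq y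
  rw [← hiso x (T y), hTT, inner_neg_right, neg_neg]

theorem inner_apply_swap_of_skew {T : V →ₗ[ℝ] V} (hT : ∀ x y, ⟪T x, y⟫ = -⟪x, T y⟫) (x y : V) :
    ⟪y, T x⟫ = -⟪x, T y⟫ := by
  rw [real_inner_comm, hT]

theorem kaehlerWedge_mem_algebraicCurvatureTensors {T : V →ₗ[ℝ] V}
    (hT : ∀ x y, ⟪T x, y⟫ = -⟪x, T y⟫) :
    kaehlerWedge T ∈ algebraicCurvatureTensors V := by
  have swap := inner_apply_swap_of_skew hT
  refine ⟨fun X Y Z => ?_, fun X Y Z W => ?_, fun X Y Z => ?_⟩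
  · simp only [kaehlerWedge, wedge, swap X Y]; module
  · simp only [kaehlerWedge, inner_add_left, inner_wedge_left, real_inner_smul_left, hT,
      swap Z W]
    ring
  · simp only [kaehlerWedge, wedge, hT, swap X Y, swap X Z, swap Y Z,
      real_inner_comm X Z, real_inner_comm X Y, real_inner_comm Y Z]
    module

theorem inner_apply_swap_of_isSymmetric {S : V →ₗ[ℝ] V} (hS : S.IsSymmetric) (x y : V) :
    ⟪y, S x⟫ = ⟪x, S y⟫ := by
  rw [real_inner_comm, hS]

theorem symmWedge_mem_algebraicCurvatureTensors {S : V →ₗ[ℝ] V} (hS : S.IsSymmetric) :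
    symmWedge S ∈ algebraicCurvatureTensors V := by
  have swap := inner_apply_swap_of_isSymmetric hS
  refine ⟨fun X Y Z => ?_, fun X Y Z W => ?_, fun X Y Z => ?_⟩
  · simp only [symmWedge, wedge, map_sub, map_smul]; module
  · simp only [symmWedge, inner_add_left, inner_wedge_left, hS _ W, hS _ Z]
    ring
  · simp only [symmWedge, wedge, map_sub, map_smul, swap X Y, swap X Z, swap Y Z,
      real_inner_comm X Z, real_inner_comm X Y, real_inner_comm Y Z]
    module

theorem conjWedge_mem_algebraicCurvatureTensors {S : V →ₗ[ℝ] V} (hS : S.IsSymmetric) :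
    conjWedge S ∈ algebraicCurvatureTensors V := by
  have swap := inner_apply_swap_of_isSymmetric hS
  refine ⟨fun X Y Z => ?_, fun X Y Z W => ?_, fun X Y Z => ?_⟩
  · simp only [conjWedge, wedge, map_sub, map_smul]; module
  · rw [conjWedge, conjWedge, hS, hS, inner_wedge_left, inner_wedge_left]; ring
  · simp only [conjWedge, wedge, map_sub, map_smul, swap X Y, swap X Z, swap Y Z]
    module

end

theorem stmt9_general {V : Type*} [NormedAddCommGroup V] [InnerProductSpace ℝ V]
    (J₁ J P : V →ₗ[ℝ] V) (a : ℝ)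
    (hJ₁sq : J₁ ∘ₗ J₁ = -LinearMap.id)
    (hJ₁iso : ∀ x y : V, ⟪J₁ x, J₁ y⟫ = ⟪x, y⟫)
    (hJsq : J ∘ₗ J = -LinearMap.id)
    (hJiso : ∀ x y : V, ⟪J x, J y⟫ = ⟪x, y⟫)
    (hPsa : ∀ x y : V, ⟪P x, y⟫ = ⟪x, P y⟫)
    (R : V → V → V → V)
    (hR : ∀ X Y Z : V, R X Y Z =
      ((a - 1) * (a + 2) / a ^ 2) • wedge X Y Z
      + (1 / a) • (wedge X Y Z + wedge (J₁ X) (J₁ Y) Z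
          + (2 * ⟪X, J₁ Y⟫) • J₁ Z)
      + ((1 - a) / a ^ 2) • (wedge X Y Z + wedge (J X) (J Y) Z
          + (2 * ⟪X, J Y⟫) • J Z)
      + ((1 - a) / a) • (wedge X Y (P Z) + P (wedge X Y Z)
          - ((a + 2) / a) • P (wedge X Y (P Z)))) :
    (∀ X Y Z : V, R X Y Z = -R Y X Z) ∧
    (∀ X Y Z W : V, ⟪R X Y Z, W⟫ = -⟪R X Y W, Z⟫) ∧
    (∀ X Y Z : V, R X Y Z + R Y Z X + R Z X Y = 0) := by
  have hR_comb : R = ((a - 1) * (a + 2) / a ^ 2) • wedge + (1 / a) • kaehlerWedge J₁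
      + ((1 - a) / a ^ 2) • kaehlerWedge J
      + ((1 - a) / a) • (symmWedge P - ((a + 2) / a) • conjWedge P) := by
    funext X Y Z
    exact hR X Y Z
  have hJ₁ := inner_map_left_eq_neg_of_comp_self_eq_neg_id hJ₁sq hJ₁iso
  have hJ := inner_map_left_eq_neg_of_comp_self_eq_neg_id hJsq hJiso
  show R ∈ algebraicCurvatureTensors V
  rw [hR_comb]
  refine add_mem (add_mem (add_mem ?_ ?_) ?_) ?_
  all_goals refine Submodule.smul_mem _ _ ?_
  · exact wedge_mem_algebraicCurvatureTensors
  · exact kaehlerWedge_mem_algebraicCurvatureTensors hJ₁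
  · exact kaehlerWedge_mem_algebraicCurvatureTensors hJ
  · exact sub_mem (symmWedge_mem_algebraicCurvatureTensors hPsa)
      (Submodule.smul_mem _ _ (conjWedge_mem_algebraicCurvatureTensors hPsa))

theorem stmt9 {V : Type*} [NormedAddCommGroup V] [InnerProductSpace ℝ V]
    [FiniteDimensional ℝ V] (hdim : Module.finrank ℝ V = 6)
    (J₁ J P : V →ₗ[ℝ] V) (a : ℝ) (ha : 0 < a)
    (hJ₁sq : J₁ ∘ₗ J₁ = -LinearMap.id)
    (hJ₁iso : ∀ x y : V, ⟪J₁ x, J₁ y⟫ = ⟪x, y⟫)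
    (hJsq : J ∘ₗ J = -LinearMap.id)
    (hJiso : ∀ x y : V, ⟪J x, J y⟫ = ⟪x, y⟫)
    (hPsq : P ∘ₗ P = LinearMap.id)
    (hPiso : ∀ x y : V, ⟪P x, P y⟫ = ⟪x, y⟫)
    (hPsa : ∀ x y : V, ⟪P x, y⟫ = ⟪x, P y⟫)
    (hP : P = -(J ∘ₗ J₁))
    (hJPJ₁ : J = P ∘ₗ J₁)
    (hcomm : P ∘ₗ J₁ = J₁ ∘ₗ P)
    (R : V → V → V → V)
    (hR : ∀ X Y Z : V, R X Y Z =
      ((a - 1) * (a + 2) / a ^ 2) • wedge X Y Z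
      + (1 / a) • (wedge X Y Z + wedge (J₁ X) (J₁ Y) Z
          + (2 * ⟪X, J₁ Y⟫) • J₁ Z)
      + ((1 - a) / a ^ 2) • (wedge X Y Z + wedge (J X) (J Y) Z
          + (2 * ⟪X, J Y⟫) • J Z)
      + ((1 - a) / a) • (wedge X Y (P Z) + P (wedge X Y Z)
          - ((a + 2) / a) • P (wedge X Y (P Z)))) :
    (∀ X Y Z : V, R X Y Z = -R Y X Z) ∧
    (∀ X Y Z W : V, ⟪R X Y Z, W⟫ = -⟪R X Y W, Z⟫) ∧
    (∀ X Y Z : V, R X Y Z + R Y Z X + R Z X Y = 0) :=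
  stmt9_general J₁ J P a hJ₁sq hJ₁iso hJsq hJiso hPsa R hR
end

section
/- Let R be the curvature tensor of (ℂP³, gₐ) given by the formula in Theorem 'curvature of CP3a'. Then the associated Ricci tensor satisfies Ric(X,Y) = 4(1 + 1/a²)·gₐ((id-P)/2 · X, Y) + 4(3a-1)/a² · gₐ((id+P)/2 · X, Y), where the trace is taken over a gₐ-orthonormal basis adapted to the eigenspaces of P (dim 2 for eigenvalue -1, dim 4 for eigenvalue +1), and the scalar curvature equals 8(a² + 6a - 1)/a². -/
/-!
Contract each of the four pieces of `R` over an orthonormal basis of the `n`-dimensional space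
(`n = 6`). The constant-curvature piece `X ∧ Y` contracts to `(n - 1) g`; for an isometric complex
structure `T`, the piece `(X ∧ Y)Z + (TX ∧ TY)Z + 2 g(X, TY) TZ` contracts to `(n + 2) g = 8 g`,
because `T` is skew. In the `P`-piece the contraction produces `tr P`, which is
`dim E₊ - dim E₋ = 4 - 2 = 2` in the adapted basis. Altogether
`Ric = (2 + 6/a) g + ((-2a² + 6a - 4)/a²) g(P ·, ·)`, which is the stated formula, and tracing it
once more gives the scalar curvature `6 (2 + 6/a) + 2 (-2a² + 6a - 4)/a²`.
-/

open scoped RealInnerProductSpace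

section Contractions

variable {V : Type*} [NormedAddCommGroup V] [InnerProductSpace ℝ V]

noncomputable def cp3Curvature (a : ℝ) (J₁ J P : V →ₗ[ℝ] V) (X Y Z : V) : V :=
  ((a - 1) * (a + 2) / a ^ 2) • wedge X Y Z
  + (1 / a) • (wedge X Y Z + wedge (J₁ X) (J₁ Y) Z + (2 * ⟪X, J₁ Y⟫) • J₁ Z)
  + ((1 - a) / a ^ 2) • (wedge X Y Z + wedge (J X) (J Y) Z + (2 * ⟪X, J Y⟫) • J Z)
  + ((1 - a) / a) • (wedge X Y (P Z) + P (wedge X Y Z) - ((a + 2) / a) • P (wedge X Y (P Z)))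

section ComplexStructure

variable {T : V →ₗ[ℝ] V} (hTsq : T ∘ₗ T = -LinearMap.id) (hTiso : ∀ x y : V, ⟪T x, T y⟫ = ⟪x, y⟫)
include hTsq hTiso

theorem inner_map_left_eq_neg_of_sq_eq_neg_id (x y : V) : ⟪T x, y⟫ = -⟪x, T y⟫ := by
  have hTT : T (T y) = -y := by simpa using LinearMap.congr_fun hTsq y
  have h := hTiso x (T y)
  rw [hTT, inner_neg_right] at h
  linarith

theorem inner_map_self_eq_zero_of_sq_eq_neg_id (x : V) : ⟪T x, x⟫ = 0 := by
  have h := inner_map_left_eq_neg_of_sq_eq_neg_id hTsq hTiso x x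
  rw [real_inner_comm (T x) x] at h
  linarith

end ComplexStructure

namespace OrthonormalBasis

variable {ι : Type*} [Fintype ι] (b : OrthonormalBasis ι ℝ V)

theorem sum_inner_wedge_left (Z W : V) :
    ∑ i, ⟪wedge (b i) Z W, b i⟫ = (Fintype.card ι - 1) * ⟪Z, W⟫ := by
  have hterm : ∀ i, ⟪wedge (b i) Z W, b i⟫ = ⟪Z, W⟫ - ⟪Z, b i⟫ * ⟪b i, W⟫ := fun i => by
    simp only [wedge, inner_sub_left, real_inner_smul_left, real_inner_self_eq_norm_sq,
      b.orthonormal.1 i, real_inner_comm W (b i)]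
    ring
  simp only [hterm, Finset.sum_sub_distrib, b.sum_inner_mul_inner, Finset.sum_const,
    Finset.card_univ, nsmul_eq_mul]
  ring

theorem sum_inner_wedge_map {T : V →ₗ[ℝ] V} (hTsq : T ∘ₗ T = -LinearMap.id)
    (hTiso : ∀ x y : V, ⟪T x, T y⟫ = ⟪x, y⟫) (Z W : V) :
    ∑ i, ⟪wedge (T (b i)) (T Z) W, b i⟫ = ⟪Z, W⟫ := by
  have hterm : ∀ i, ⟪wedge (T (b i)) (T Z) W, b i⟫ = ⟪T Z, b i⟫ * ⟪b i, T W⟫ := fun i => by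
    simp only [wedge, inner_sub_left, real_inner_smul_left,
      inner_map_self_eq_zero_of_sq_eq_neg_id hTsq hTiso, inner_map_left_eq_neg_of_sq_eq_neg_id hTsq hTiso (b i)]
    ring
  simp only [hterm, b.sum_inner_mul_inner, hTiso]

theorem sum_inner_map_wedge_left (P : V →ₗ[ℝ] V) (Z W : V) :
    ∑ i, ⟪P (wedge (b i) Z W), b i⟫ = (∑ i, ⟪P (b i), b i⟫) * ⟪Z, W⟫ - ⟪P Z, W⟫ := by
  have hterm : ∀ i, ⟪P (wedge (b i) Z W), b i⟫
      = ⟪P (b i), b i⟫ * ⟪Z, W⟫ - ⟪P Z, b i⟫ * ⟪b i, W⟫ := fun i => by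
    simp only [wedge, map_sub, map_smul, inner_sub_left, real_inner_smul_left,
      real_inner_comm W (b i)]
    ring
  simp only [hterm, Finset.sum_sub_distrib, ← Finset.sum_mul, b.sum_inner_mul_inner]

end OrthonormalBasis

theorem sum_inner_apply_basis_eq_two {P : V →ₗ[ℝ] V} (b : OrthonormalBasis (Fin 6) ℝ V)
    (hbm : ∀ i : Fin 6, (i : ℕ) < 2 → P (b i) = -b i)
    (hbp : ∀ i : Fin 6, 2 ≤ (i : ℕ) → P (b i) = b i) :
    ∑ i, ⟪P (b i), b i⟫ = 2 := by
  rw [Fin.sum_univ_six, hbm 0 (by decide), hbm 1 (by decide), hbp 2 (by decide),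
    hbp 3 (by decide), hbp 4 (by decide), hbp 5 (by decide)]
  simp only [inner_neg_left, real_inner_self_eq_norm_sq, b.orthonormal.1]
  norm_num

theorem sum_inner_cp3Curvature {a : ℝ} (ha : a ≠ 0) {J₁ J P : V →ₗ[ℝ] V}
    (hJ₁sq : J₁ ∘ₗ J₁ = -LinearMap.id) (hJ₁iso : ∀ x y : V, ⟪J₁ x, J₁ y⟫ = ⟪x, y⟫)
    (hJsq : J ∘ₗ J = -LinearMap.id) (hJiso : ∀ x y : V, ⟪J x, J y⟫ = ⟪x, y⟫)
    (hPsq : P ∘ₗ P = LinearMap.id) (hPsa : ∀ x y : V, ⟪P x, y⟫ = ⟪x, P y⟫)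
    (b : OrthonormalBasis (Fin 6) ℝ V) (htrP : ∑ i, ⟪P (b i), b i⟫ = 2) (X Y : V) :
    ∑ i, ⟪cp3Curvature a J₁ J P (b i) X Y, b i⟫
      = (2 + 6 / a) * ⟪X, Y⟫ + ((-2 * a ^ 2 + 6 * a - 4) / a ^ 2) * ⟪P X, Y⟫ := by
  have hPP : ⟪P X, P Y⟫ = ⟪X, Y⟫ := by
    rw [hPsa, ← LinearMap.comp_apply P P, hPsq, LinearMap.id_apply]
  have hParseval : ∀ u v : V, ∑ i, ⟪b i, u⟫ * ⟪v, b i⟫ = ⟪u, v⟫ := fun u v => by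
    rw [← b.sum_inner_mul_inner u v]
    exact Finset.sum_congr rfl fun i _ => by rw [real_inner_comm u, real_inner_comm (b i) v]
  simp only [cp3Curvature, inner_add_left, inner_sub_left, real_inner_smul_left,
    Finset.sum_add_distrib, Finset.sum_sub_distrib, ← Finset.mul_sum, mul_assoc]
  rw [b.sum_inner_wedge_left, b.sum_inner_wedge_left, b.sum_inner_map_wedge_left,
    b.sum_inner_map_wedge_left, b.sum_inner_wedge_map hJ₁sq hJ₁iso,
    b.sum_inner_wedge_map hJsq hJiso, hParseval, hParseval, hJ₁iso, hJiso, htrP, hPP,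
    ← hPsa X Y]
  simp only [Fintype.card_fin]
  field_simp
  ring

end Contractions

theorem stmt10_general {V : Type*} [NormedAddCommGroup V] [InnerProductSpace ℝ V]
    (J₁ J P : V →ₗ[ℝ] V) (a : ℝ) (ha : 0 < a)
    (hJ₁sq : J₁ ∘ₗ J₁ = -LinearMap.id)
    (hJ₁iso : ∀ x y : V, ⟪J₁ x, J₁ y⟫ = ⟪x, y⟫)
    (hJsq : J ∘ₗ J = -LinearMap.id)
    (hJiso : ∀ x y : V, ⟪J x, J y⟫ = ⟪x, y⟫)
    (hPsq : P ∘ₗ P = LinearMap.id)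
    (hPsa : ∀ x y : V, ⟪P x, y⟫ = ⟪x, P y⟫)
    -- a gₐ-orthonormal basis adapted to the eigenspaces of P:
    -- the first two vectors span the (-1)-eigenspace, the last four the (+1)-eigenspace
    (b : OrthonormalBasis (Fin 6) ℝ V)
    (hbm : ∀ i : Fin 6, (i : ℕ) < 2 → P (b i) = -b i)
    (hbp : ∀ i : Fin 6, 2 ≤ (i : ℕ) → P (b i) = b i)
    (R : V → V → V → V)
    (hR : ∀ X Y Z : V, R X Y Z =
      ((a - 1) * (a + 2) / a ^ 2) • wedge X Y Z
      + (1 / a) • (wedge X Y Z + wedge (J₁ X) (J₁ Y) Z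
          + (2 * ⟪X, J₁ Y⟫) • J₁ Z)
      + ((1 - a) / a ^ 2) • (wedge X Y Z + wedge (J X) (J Y) Z
          + (2 * ⟪X, J Y⟫) • J Z)
      + ((1 - a) / a) • (wedge X Y (P Z) + P (wedge X Y Z)
          - ((a + 2) / a) • P (wedge X Y (P Z)))) :
    (∀ X Y : V, (∑ i, ⟪R (b i) X Y, b i⟫) =
        4 * (1 + 1 / a ^ 2) * ⟪(2⁻¹ : ℝ) • (X - P X), Y⟫
        + 4 * (3 * a - 1) / a ^ 2 * ⟪(2⁻¹ : ℝ) • (X + P X), Y⟫) ∧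
    (∑ j, ∑ i, ⟪R (b i) (b j) (b j), b i⟫) = 8 * (a ^ 2 + 6 * a - 1) / a ^ 2 := by
  obtain rfl : R = cp3Curvature a J₁ J P := funext₃ hR
  have htrP := sum_inner_apply_basis_eq_two b hbm hbp
  have hRic := sum_inner_cp3Curvature ha.ne' hJ₁sq hJ₁iso hJsq hJiso hPsq hPsa b htrP
  refine ⟨fun X Y => ?_, ?_⟩
  · rw [hRic]
    simp only [real_inner_smul_left, inner_sub_left, inner_add_left]
    field_simp
    ring
  · simp only [hRic, Finset.sum_add_distrib, ← Finset.mul_sum, htrP,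
      real_inner_self_eq_norm_sq, b.orthonormal.1, Finset.sum_const, Finset.card_univ,
      Fintype.card_fin]
    field_simp
    ring

theorem stmt10 {V : Type*} [NormedAddCommGroup V] [InnerProductSpace ℝ V]
    [FiniteDimensional ℝ V] (hdim : Module.finrank ℝ V = 6)
    (J₁ J P : V →ₗ[ℝ] V) (a : ℝ) (ha : 0 < a)
    (hJ₁sq : J₁ ∘ₗ J₁ = -LinearMap.id)
    (hJ₁iso : ∀ x y : V, ⟪J₁ x, J₁ y⟫ = ⟪x, y⟫)
    (hJsq : J ∘ₗ J = -LinearMap.id)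
    (hJiso : ∀ x y : V, ⟪J x, J y⟫ = ⟪x, y⟫)
    (hPsq : P ∘ₗ P = LinearMap.id)
    (hPsa : ∀ x y : V, ⟪P x, y⟫ = ⟪x, P y⟫)
    (hP : P = -(J ∘ₗ J₁))
    (hJPJ₁ : J = P ∘ₗ J₁)
    (hcomm : P ∘ₗ J₁ = J₁ ∘ₗ P)
    -- a gₐ-orthonormal basis adapted to the eigenspaces of P:
    -- the first two vectors span the (-1)-eigenspace, the last four the (+1)-eigenspace
    (b : OrthonormalBasis (Fin 6) ℝ V)
    (hbm : ∀ i : Fin 6, (i : ℕ) < 2 → P (b i) = -b i)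
    (hbp : ∀ i : Fin 6, 2 ≤ (i : ℕ) → P (b i) = b i)
    (R : V → V → V → V)
    (hR : ∀ X Y Z : V, R X Y Z =
      ((a - 1) * (a + 2) / a ^ 2) • wedge X Y Z
      + (1 / a) • (wedge X Y Z + wedge (J₁ X) (J₁ Y) Z
          + (2 * ⟪X, J₁ Y⟫) • J₁ Z)
      + ((1 - a) / a ^ 2) • (wedge X Y Z + wedge (J X) (J Y) Z
          + (2 * ⟪X, J Y⟫) • J Z)
      + ((1 - a) / a) • (wedge X Y (P Z) + P (wedge X Y Z)
          - ((a + 2) / a) • P (wedge X Y (P Z)))) :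
    (∀ X Y : V, (∑ i, ⟪R (b i) X Y, b i⟫) =
        4 * (1 + 1 / a ^ 2) * ⟪(2⁻¹ : ℝ) • (X - P X), Y⟫
        + 4 * (3 * a - 1) / a ^ 2 * ⟪(2⁻¹ : ℝ) • (X + P X), Y⟫) ∧
    (∑ j, ∑ i, ⟪R (b i) (b j) (b j), b i⟫) = 8 * (a ^ 2 + 6 * a - 1) / a ^ 2 :=
  stmt10_general J₁ J P a ha hJ₁sq hJ₁iso hJsq hJiso hPsq hPsa b hbm hbp R hR
end

section
/- With R the algebraic curvature tensor of (ℂP³, gₐ) as defined by the explicit formula, the Ricci tensor Ric(X,Y) = λ gₐ(X,Y) is Einstein (i.e., Ric is a constant multiple of gₐ) if and only if a = 1 or a = 2. -/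
open scoped RealInnerProductSpace

theorem stmt11 {V : Type*} [NormedAddCommGroup V] [InnerProductSpace ℝ V]
    [FiniteDimensional ℝ V] (hdim : Module.finrank ℝ V = 6)
    (P : V →ₗ[ℝ] V) (a : ℝ) (ha : 0 < a)
    (hPsq : P ∘ₗ P = LinearMap.id)
    (hPsa : ∀ x y : V, ⟪P x, y⟫ = ⟪x, P y⟫)
    -- the (-1)-eigenspace of P is 2-dimensional and the (+1)-eigenspace is 4-dimensional
    (hm : Module.finrank ℝ (Module.End.eigenspace (P : Module.End ℝ V) (-1)) = 2)
    (hp : Module.finrank ℝ (Module.End.eigenspace (P : Module.End ℝ V) 1) = 4)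
    (Ric : V → V → ℝ)
    (hRic : ∀ X Y : V, Ric X Y =
      4 * (1 + 1 / a ^ 2) * ⟪(2⁻¹ : ℝ) • (X - P X), Y⟫
      + 4 * (3 * a - 1) / a ^ 2 * ⟪(2⁻¹ : ℝ) • (X + P X), Y⟫) :
    (∃ lam : ℝ, ∀ X Y : V, Ric X Y = lam * ⟪X, Y⟫) ↔ (a = 1 ∨ a = 2) := by
  have ha2 : (a : ℝ) ^ 2 ≠ 0 := pow_ne_zero 2 (ne_of_gt ha)
  constructor
  · rintro ⟨lam, hlam⟩
    -- nonzero vector in (-1)-eigenspace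
    have hm' : 0 < Module.finrank ℝ (Module.End.eigenspace (P : Module.End ℝ V) (-1)) := by
      rw [hm]; norm_num
    obtain ⟨v, hv, hv0'⟩ := Submodule.exists_mem_ne_zero_of_ne_bot
      (Submodule.nontrivial_iff_ne_bot.mp (Module.finrank_pos_iff.mp hm'))
    have hPv : P v = (-1 : ℝ) • v := Module.End.mem_eigenspace_iff.mp hv
    have hp' : 0 < Module.finrank ℝ (Module.End.eigenspace (P : Module.End ℝ V) 1) := by
      rw [hp]; norm_num
    obtain ⟨w, hw, hw0'⟩ := Submodule.exists_mem_ne_zero_of_ne_bot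
      (Submodule.nontrivial_iff_ne_bot.mp (Module.finrank_pos_iff.mp hp'))
    have hPw : P w = (1 : ℝ) • w := Module.End.mem_eigenspace_iff.mp hw
    have hvv : ⟪v, v⟫ ≠ 0 := by
      simpa [real_inner_self_eq_norm_sq] using
        pow_ne_zero 2 (norm_ne_zero_iff.mpr hv0')
    have hww : ⟪w, w⟫ ≠ 0 := by
      simpa [real_inner_self_eq_norm_sq] using
        pow_ne_zero 2 (norm_ne_zero_iff.mpr hw0')
    have h1 := (hlam v v).symm.trans (hRic v v)
    have h2 := (hlam w w).symm.trans (hRic w w)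
    rw [hPv] at h1
    rw [hPw] at h2
    simp only [neg_smul, one_smul, sub_neg_eq_add, sub_self, add_neg_cancel,
      smul_zero, inner_zero_left, real_inner_smul_left] at h1 h2
    -- h1 : lam * ⟪v,v⟫ = 4*(1+1/a^2) * (2⁻¹ * ⟪v+v, v⟫) + 0 etc.
    have e1 : lam = 4 * (1 + 1 / a ^ 2) := by
      have : lam * ⟪v, v⟫ = 4 * (1 + 1 / a ^ 2) * ⟪v, v⟫ := by
        rw [h1, inner_add_left]; ring
      exact mul_right_cancel₀ hvv this
    have e2 : lam = 4 * (3 * a - 1) / a ^ 2 := by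
      have : lam * ⟪w, w⟫ = 4 * (3 * a - 1) / a ^ 2 * ⟪w, w⟫ := by
        rw [h2, inner_add_left]; ring
      exact mul_right_cancel₀ hww this
    have key : a ^ 2 + 1 = 3 * a - 1 := by
      have := e1.symm.trans e2
      field_simp at this
      nlinarith [this]
    have : (a - 1) * (a - 2) = 0 := by nlinarith
    rcases mul_eq_zero.mp this with h | h
    · left; linarith
    · right; linarith
  · rintro h
    have hc : 4 * (1 + 1 / a ^ 2) = 4 * (3 * a - 1) / a ^ 2 := by
      rcases h with rfl | rfl <;> norm_num
    refine ⟨4 * (1 + 1 / a ^ 2), fun X Y => ?_⟩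
    rw [hRic, ← hc]
    simp [real_inner_smul_left, inner_sub_left, inner_add_left]
    ring
end

section
/- For the curvature tensor R of (ℂP³, gₐ) and gₐ-orthonormal vectors X, Y, the sectional curvature gₐ(R(X,Y)Y, X) equals (a²+a-1)/a² + (3/a)gₐ(X,J₁Y)² + 3(1-a)/a² · gₐ(X,JY)² + ((1-a)/a)[gₐ(Y,PY) + gₐ(PX,X) - ((a+2)/a)(gₐ(Y,PY)gₐ(PX,X) - gₐ(X,PY)²)]. -/
open scoped RealInnerProductSpace

theorem stmt12 {V : Type*} [NormedAddCommGroup V] [InnerProductSpace ℝ V]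
    [FiniteDimensional ℝ V] (hdim : Module.finrank ℝ V = 6)
    (J₁ J P : V →ₗ[ℝ] V) (a : ℝ) (ha : 0 < a)
    (hJ₁sq : J₁ ∘ₗ J₁ = -LinearMap.id)
    (hJ₁iso : ∀ x y : V, ⟪J₁ x, J₁ y⟫ = ⟪x, y⟫)
    (hJsq : J ∘ₗ J = -LinearMap.id)
    (hJiso : ∀ x y : V, ⟪J x, J y⟫ = ⟪x, y⟫)
    (hPsq : P ∘ₗ P = LinearMap.id)
    (hPsa : ∀ x y : V, ⟪P x, y⟫ = ⟪x, P y⟫)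
    (hP : P = -(J ∘ₗ J₁))
    (hJPJ₁ : J = P ∘ₗ J₁)
    (hcomm : P ∘ₗ J₁ = J₁ ∘ₗ P)
    (R : V → V → V → V)
    (hR : ∀ X Y Z : V, R X Y Z =
      ((a - 1) * (a + 2) / a ^ 2) • wedge X Y Z
      + (1 / a) • (wedge X Y Z + wedge (J₁ X) (J₁ Y) Z
          + (2 * ⟪X, J₁ Y⟫) • J₁ Z)
      + ((1 - a) / a ^ 2) • (wedge X Y Z + wedge (J X) (J Y) Z
          + (2 * ⟪X, J Y⟫) • J Z)
      + ((1 - a) / a) • (wedge X Y (P Z) + P (wedge X Y Z)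
          - ((a + 2) / a) • P (wedge X Y (P Z))))
    (X Y : V) (hX : ‖X‖ = 1) (hY : ‖Y‖ = 1) (hXY : ⟪X, Y⟫ = 0) :
    ⟪R X Y Y, X⟫ =
      (a ^ 2 + a - 1) / a ^ 2
      + (3 / a) * ⟪X, J₁ Y⟫ ^ 2
      + 3 * (1 - a) / a ^ 2 * ⟪X, J Y⟫ ^ 2
      + ((1 - a) / a) * (⟪Y, P Y⟫ + ⟪P X, X⟫
          - ((a + 2) / a) * (⟪Y, P Y⟫ * ⟪P X, X⟫ - ⟪X, P Y⟫ ^ 2)) := by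

  have hXX : ⟪X, X⟫ = 1 := by
    rw [real_inner_self_eq_norm_sq, hX]; norm_num
  have hYY : ⟪Y, Y⟫ = 1 := by
    rw [real_inner_self_eq_norm_sq, hY]; norm_num
  have hJ₁skew : ∀ x y : V, ⟪J₁ x, y⟫ = -⟪x, J₁ y⟫ := by
    intro x y
    have h1 : J₁ (J₁ y) = -y := by
      have := congrArg (fun f => f y) hJ₁sq; simpa using this
    have h2 := hJ₁iso x (J₁ y)
    rw [h1, inner_neg_right] at h2
    linarith
  have hJskew : ∀ x y : V, ⟪J x, y⟫ = -⟪x, J y⟫ := by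
    intro x y
    have h1 : J (J y) = -y := by
      have := congrArg (fun f => f y) hJsq; simpa using this
    have h2 := hJiso x (J y)
    rw [h1, inner_neg_right] at h2
    linarith
  have hJ₁YY : ⟪J₁ Y, Y⟫ = 0 := by
    have := hJ₁skew Y Y
    have h2 : ⟪Y, J₁ Y⟫ = ⟪J₁ Y, Y⟫ := real_inner_comm _ _
    linarith [this, h2 ▸ this]
  have hJYY : ⟪J Y, Y⟫ = 0 := by
    have := hJskew Y Y
    have h2 : ⟪Y, J Y⟫ = ⟪J Y, Y⟫ := real_inner_comm _ _
    linarith [this, h2 ▸ this]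
  have hJ₁XY : ⟪J₁ X, Y⟫ = -⟪X, J₁ Y⟫ := hJ₁skew X Y
  have hJXY : ⟪J X, Y⟫ = -⟪X, J Y⟫ := hJskew X Y
  have hYX : ⟪Y, X⟫ = 0 := by rw [real_inner_comm]; exact hXY
  rw [hR]
  simp only [wedge, map_sub, map_smul, inner_add_left, inner_sub_left,
    inner_smul_left, real_inner_comm (J₁ Y) X, real_inner_comm (J Y) X,
    real_inner_comm (P Y) X, real_inner_comm (P X) X, real_inner_comm Y X,
    hXX, hYY, hXY, hYX, hJ₁YY, hJYY, hJ₁XY, hJXY, RCLike.ofReal_real_eq_id, id, conj_trivial]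
  have ha' : a ≠ 0 := ne_of_gt ha
  field_simp
  ring
end
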